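/- arXiv:0911.0804 — 4 statements merged into one kernel-verified Lean document; each statement's English description precedes it below -/
import Mathlib

section
/- Let f, g be smooth diffeomorphisms of [0,∞) fixing only 0, with f(x) < x and g(x) < x for all x > 0. If there exists a smooth diffeomorphism h of [0,∞) with h ∘ f = g ∘ h, then for every x > 0, setting ξ = h(x), the infinite product ∏_{n=0}^∞ f'(fⁿ(x))/g'(gⁿ(ξ)) converges to h'(x)/h'(0). -/
open Set Filter

/-- If smooth diffeomorphisms `f, g` of `[0,∞)` fixing only `0`, with `f x < x` and
`g x < x` on `(0,∞)`, are conjugate via a smooth diffeomorphism `h` (`h ∘ f = g ∘ h`),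
then for each `x > 0`, with `ξ = h x`, the product `∏_{n≥0} f'(fⁿ(x))/g'(gⁿ(ξ))`
converges to `h'(x)/h'(0)`. -/
theorem stmt_2 (f g h : ℝ → ℝ)
    (hfs : ContDiffOn ℝ (⊤ : ℕ∞) f (Ici 0)) (hgs : ContDiffOn ℝ (⊤ : ℕ∞) g (Ici 0))
    (hhs : ContDiffOn ℝ (⊤ : ℕ∞) h (Ici 0))
    (hfb : BijOn f (Ici 0) (Ici 0)) (hgb : BijOn g (Ici 0) (Ici 0))
    (hhb : BijOn h (Ici 0) (Ici 0))
    (hfm : StrictMonoOn f (Ici 0)) (hgm : StrictMonoOn g (Ici 0))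
    (hhm : StrictMonoOn h (Ici 0))
    (hf0 : f 0 = 0) (hg0 : g 0 = 0) (hh0 : h 0 = 0)
    (hfd : ∀ x ∈ Ici (0:ℝ), derivWithin f (Ici 0) x ≠ 0)
    (hgd : ∀ x ∈ Ici (0:ℝ), derivWithin g (Ici 0) x ≠ 0)
    (hhd : ∀ x ∈ Ici (0:ℝ), derivWithin h (Ici 0) x ≠ 0)
    (hfneg : ∀ x > (0:ℝ), f x < x) (hgneg : ∀ x > (0:ℝ), g x < x)
    (hffix : ∀ x > (0:ℝ), 0 < f x) (hgfix : ∀ x > (0:ℝ), 0 < g x)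
    (hconj : ∀ x ∈ Ici (0:ℝ), h (f x) = g (h x)) :
    ∀ x > (0:ℝ),
      Tendsto (fun N => ∏ n ∈ Finset.range N,
          derivWithin f (Ici 0) (f^[n] x) / derivWithin g (Ici 0) (g^[n] (h x)))
        atTop (nhds (derivWithin h (Ici 0) x / derivWithin h (Ici 0) 0)) := by
  intro x hx
  have udiff : UniqueDiffOn ℝ (Ici (0:ℝ)) := uniqueDiffOn_Ici 0
  have hfmap : MapsTo f (Ici 0) (Ici 0) := hfb.mapsTo
  have hhmap : MapsTo h (Ici 0) (Ici 0) := hhb.mapsTo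
  -- positivity of iterates
  have hapos : ∀ n, 0 < f^[n] x := by
    intro n
    induction n with
    | zero => simpa using hx
    | succ n ih => rw [Function.iterate_succ_apply']; exact hffix _ ih
  have hamem : ∀ n, f^[n] x ∈ Ici (0:ℝ) := fun n => (hapos n).le
  -- conjugacy of iterates
  have hconj_iter : ∀ n, h (f^[n] x) = g^[n] (h x) := by
    intro n
    induction n with
    | zero => rfl
    | succ n ih =>
      rw [Function.iterate_succ_apply', Function.iterate_succ_apply', ← ih,
        hconj _ (hamem n)]
  -- chain rule identity
  have key : ∀ y ∈ Ici (0:ℝ),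
      derivWithin h (Ici 0) (f y) * derivWithin f (Ici 0) y
        = derivWithin g (Ici 0) (h y) * derivWithin h (Ici 0) y := by
    intro y hy
    have hfy : f y ∈ Ici (0:ℝ) := hfmap hy
    have hhy : h y ∈ Ici (0:ℝ) := hhmap hy
    have Hf : HasDerivWithinAt f (derivWithin f (Ici 0) y) (Ici 0) y :=
      ((hfs.differentiableOn (by simp)) y hy).hasDerivWithinAt
    have Hh : HasDerivWithinAt h (derivWithin h (Ici 0) (f y)) (Ici 0) (f y) :=
      ((hhs.differentiableOn (by simp)) (f y) hfy).hasDerivWithinAt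
    have Hh' : HasDerivWithinAt h (derivWithin h (Ici 0) y) (Ici 0) y :=
      ((hhs.differentiableOn (by simp)) y hy).hasDerivWithinAt
    have Hg : HasDerivWithinAt g (derivWithin g (Ici 0) (h y)) (Ici 0) (h y) :=
      ((hgs.differentiableOn (by simp)) (h y) hhy).hasDerivWithinAt
    have Hc1 : HasDerivWithinAt (h ∘ f)
        (derivWithin h (Ici 0) (f y) * derivWithin f (Ici 0) y) (Ici 0) y :=
      Hh.comp y Hf hfmap
    have Hc2 : HasDerivWithinAt (g ∘ h)
        (derivWithin g (Ici 0) (h y) * derivWithin h (Ici 0) y) (Ici 0) y :=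
      Hg.comp y Hh' hhmap
    have Hc1' : HasDerivWithinAt (g ∘ h)
        (derivWithin h (Ici 0) (f y) * derivWithin f (Ici 0) y) (Ici 0) y :=
      Hc1.congr (fun z hz => (hconj z hz).symm) (hconj y hy).symm
    have e1 := Hc1'.derivWithin (udiff y hy)
    have e2 := Hc2.derivWithin (udiff y hy)
    rw [← e1, ← e2]
  -- telescoping product
  have prod_eq : ∀ N, (∏ n ∈ Finset.range N,
      derivWithin f (Ici 0) (f^[n] x) / derivWithin g (Ici 0) (g^[n] (h x)))
        = derivWithin h (Ici 0) x / derivWithin h (Ici 0) (f^[N] x) := by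
    intro N
    induction N with
    | zero => simp [div_self (hhd x hx.le)]
    | succ N ih =>
      rw [Finset.prod_range_succ, ih, ← hconj_iter N]
      set y := f^[N] x with hydef
      have hy : y ∈ Ici (0:ℝ) := hamem N
      have hgne := hgd (h y) (hhmap hy)
      have hhne := hhd y hy
      have hhfne := hhd (f y) (hfmap hy)
      have e : derivWithin f (Ici 0) y / derivWithin g (Ici 0) (h y)
          = derivWithin h (Ici 0) y / derivWithin h (Ici 0) (f y) := by
        rw [div_eq_div_iff hgne hhfne]
        linarith [key y hy]
      rw [Function.iterate_succ_apply', ← hydef, e, div_mul_div_comm,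
        mul_comm (derivWithin h (Ici 0) x) (derivWithin h (Ici 0) y),
        mul_div_mul_left _ _ hhne]
  -- the iterates tend to 0
  have hanti : Antitone (fun n => f^[n] x) := by
    apply antitone_nat_of_succ_le
    intro n
    rw [Function.iterate_succ_apply']
    exact (hfneg _ (hapos n)).le
  have hbdd : BddBelow (Set.range fun n => f^[n] x) :=
    ⟨0, by rintro _ ⟨n, rfl⟩; exact (hapos n).le⟩
  have hL : Tendsto (fun n => f^[n] x) atTop (nhds (⨅ n, f^[n] x)) :=
    tendsto_atTop_ciInf hanti hbdd
  set L := ⨅ n, f^[n] x with hLdef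
  have hL0 : 0 ≤ L := le_ciInf fun n => (hapos n).le
  have hfLL : f L = L := by
    have h1 : Tendsto (fun n => f^[n+1] x) atTop (nhds L) :=
      hL.comp (tendsto_add_atTop_nat 1)
    have htw : Tendsto (fun n => f^[n] x) atTop (nhdsWithin L (Ici 0)) :=
      tendsto_nhdsWithin_of_tendsto_nhds_of_eventually_within _ hL
        (Eventually.of_forall hamem)
    have h2 : Tendsto (fun n => f (f^[n] x)) atTop (nhds (f L)) :=
      ((hfs.continuousOn L hL0).tendsto).comp htw
    have h1' : Tendsto (fun n => f (f^[n] x)) atTop (nhds L) := by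
      refine h1.congr fun n => ?_
      rw [Function.iterate_succ_apply']
    exact tendsto_nhds_unique h2 h1'
  have hLzero : L = 0 := by
    by_contra hne
    have hLpos : 0 < L := lt_of_le_of_ne hL0 (Ne.symm hne)
    exact absurd hfLL (ne_of_lt (hfneg L hLpos))
  rw [hLzero] at hL
  -- continuity of h'
  have hcont : ContinuousOn (derivWithin h (Ici 0)) (Ici 0) :=
    hhs.continuousOn_derivWithin udiff (by simp)
  have htw0 : Tendsto (fun n => f^[n] x) atTop (nhdsWithin 0 (Ici 0)) :=
    tendsto_nhdsWithin_of_tendsto_nhds_of_eventually_within _ hL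
      (Eventually.of_forall hamem)
  have hderivlim : Tendsto (fun N => derivWithin h (Ici 0) (f^[N] x)) atTop
      (nhds (derivWithin h (Ici 0) 0)) :=
    ((hcont 0 self_mem_Ici).tendsto).comp htw0
  have hfinal : Tendsto (fun N => derivWithin h (Ici 0) x / derivWithin h (Ici 0) (f^[N] x))
      atTop (nhds (derivWithin h (Ici 0) x / derivWithin h (Ici 0) 0)) :=
    tendsto_const_nhds.div hderivlim (hhd 0 self_mem_Ici)
  exact hfinal.congr fun N => (prod_eq N).symm
end

section
/- Let f be a smooth diffeomorphism of a compact interval I=[c,d] fixing exactly the endpoints, with f(x)>x on the interior J=(c,d). For a ∈ J define F_a(x) = ∏_{n=-∞}^∞ f'(fⁿ(x))/f'(fⁿ(a)) (which converges for all x ∈ J). Then F_a(f(x)) = F_a(x)·f'(d)/f'(c) for all x ∈ J. -/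
open Set Filter

/-- The `n`-th iterate of `f` for `n : ℤ`, using `finv` (the inverse of `f`) for
negative `n`. -/
def zIter (f finv : ℝ → ℝ) (n : ℤ) : ℝ → ℝ :=
  if 0 ≤ n then f^[n.toNat] else finv^[(-n).toNat]

/-- For a smooth diffeomorphism `f` of `I = [c,d]` fixing exactly the endpoints, with
`f x > x` on `J = (c,d)`, the two-sided product `F_a(x) = ∏_{n∈ℤ} f'(fⁿ(x))/f'(fⁿ(a))`
(assumed convergent) satisfies `F_a(f x) = F_a(x)·f'(d)/f'(c)` on `J`. -/
theorem stmt_9 (c d : ℝ) (hcd : c < d) (f finv : ℝ → ℝ)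
    (hfs : ContDiffOn ℝ (⊤ : ℕ∞) f (Icc c d))
    (hfb : BijOn f (Icc c d) (Icc c d))
    (hfm : StrictMonoOn f (Icc c d))
    (hfinv : ∀ x ∈ Icc c d, finv (f x) = x)
    (hfinv' : ∀ x ∈ Icc c d, f (finv x) = x)
    (hfc : f c = c) (hfd : f d = d)
    (hup : ∀ x ∈ Ioo c d, x < f x)
    (a : ℝ) (ha : a ∈ Ioo c d)
    (F : ℝ → ℝ)
    (hF : ∀ x ∈ Ioo c d,
      Tendsto (fun N : ℕ => ∏ n ∈ Finset.Icc (-(N:ℤ)) (N:ℤ),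
          derivWithin f (Icc c d) (zIter f finv n x) /
            derivWithin f (Icc c d) (zIter f finv n a))
        atTop (nhds (F x))) :
    ∀ x ∈ Ioo c d,
      F (f x) = F x * derivWithin f (Icc c d) d / derivWithin f (Icc c d) c := by
  have hsub : Ioo c d ⊆ Icc c d := Ioo_subset_Icc_self
  have hcI : c ∈ Icc c d := left_mem_Icc.2 hcd.le
  have hdI : d ∈ Icc c d := right_mem_Icc.2 hcd.le
  -- f maps the interior into itself
  have hfIoo : ∀ y ∈ Ioo c d, f y ∈ Ioo c d := by
    intro y hy
    constructor
    · have := hfm hcI (hsub hy) hy.1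
      rwa [hfc] at this
    · have := hfm (hsub hy) hdI hy.2
      rwa [hfd] at this
  -- finv maps the interior into itself
  have hfinvIoo : ∀ y ∈ Ioo c d, finv y ∈ Ioo c d := by
    intro y hy
    obtain ⟨z, hz, hzy⟩ := hfb.surjOn (hsub hy)
    have hzc : z ≠ c := by rintro rfl; rw [hfc] at hzy; exact hy.1.ne hzy
    have hzd : z ≠ d := by rintro rfl; rw [hfd] at hzy; exact hy.2.ne' hzy
    have hz' : z ∈ Ioo c d := ⟨lt_of_le_of_ne hz.1 (Ne.symm hzc), lt_of_le_of_ne hz.2 hzd⟩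
    rw [← hzy, hfinv z hz]
    exact hz'
  have hfk : ∀ (k : ℕ), ∀ y ∈ Ioo c d, f^[k] y ∈ Ioo c d := by
    intro k
    induction k with
    | zero => intro y hy; simpa using hy
    | succ k ih =>
      intro y hy
      rw [Function.iterate_succ_apply]
      exact ih _ (hfIoo y hy)
  have hfik : ∀ (k : ℕ), ∀ y ∈ Ioo c d, finv^[k] y ∈ Ioo c d := by
    intro k
    induction k with
    | zero => intro y hy; simpa using hy
    | succ k ih =>
      intro y hy
      rw [Function.iterate_succ_apply]
      exact ih _ (hfinvIoo y hy)
  have hcont : ContinuousOn f (Icc c d) := hfs.continuousOn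
  -- forward orbits tend to d
  have htend_d : ∀ y ∈ Ioo c d, Tendsto (fun N : ℕ => f^[N] y) atTop (nhds d) := by
    intro y hy
    have hmem : ∀ N, f^[N] y ∈ Ioo c d := fun N => hfk N y hy
    have hmono : Monotone fun N : ℕ => f^[N] y := by
      apply (strictMono_nat_of_lt_succ (fun N => ?_)).monotone
      rw [Function.iterate_succ_apply']
      exact hup _ (hmem N)
    have hbdd : BddAbove (Set.range fun N : ℕ => f^[N] y) := by
      refine ⟨d, ?_⟩
      rintro _ ⟨N, rfl⟩
      exact (hmem N).2.le
    have hlim := tendsto_atTop_ciSup hmono hbdd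
    set L := ⨆ N : ℕ, f^[N] y with hL
    have hyL : y ≤ L := by
      have := le_ciSup hbdd 0
      simpa using this
    have hLd : L ≤ d := ciSup_le fun N => (hmem N).2.le
    have hLmem : L ∈ Icc c d := ⟨le_trans (hsub hy).1 hyL, hLd⟩
    have h1 : Tendsto (fun N : ℕ => f (f^[N] y)) atTop (nhds (f L)) :=
      (hcont L hLmem).tendsto.comp
        (tendsto_nhdsWithin_iff.mpr ⟨hlim, Eventually.of_forall fun N => hsub (hmem N)⟩)
    have h2 : Tendsto (fun N : ℕ => f (f^[N] y)) atTop (nhds L) := by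
      have := hlim.comp (tendsto_add_atTop_nat 1)
      simpa [Function.comp_def, Function.iterate_succ_apply'] using this
    have hfL : f L = L := tendsto_nhds_unique h1 h2
    have hLeq : L = d := by
      by_contra hne
      have hLlt : L < d := lt_of_le_of_ne hLd hne
      exact (hup L ⟨lt_of_lt_of_le hy.1 hyL, hLlt⟩).ne' hfL
    rwa [hLeq] at hlim
  -- backward orbits tend to c
  have hfinv_lt : ∀ y ∈ Ioo c d, finv y < y := by
    intro y hy
    have h := hup (finv y) (hfinvIoo y hy)
    rwa [hfinv' y (hsub hy)] at h
  have htend_c : ∀ y ∈ Ioo c d, Tendsto (fun N : ℕ => finv^[N] y) atTop (nhds c) := by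
    intro y hy
    have hmem : ∀ N, finv^[N] y ∈ Ioo c d := fun N => hfik N y hy
    have hanti : Antitone fun N : ℕ => finv^[N] y := by
      apply (strictAnti_nat_of_succ_lt (fun N => ?_)).antitone
      rw [Function.iterate_succ_apply']
      exact hfinv_lt _ (hmem N)
    have hbdd : BddBelow (Set.range fun N : ℕ => finv^[N] y) := by
      refine ⟨c, ?_⟩
      rintro _ ⟨N, rfl⟩
      exact (hmem N).1.le
    have hlim := tendsto_atTop_ciInf hanti hbdd
    set M := ⨅ N : ℕ, finv^[N] y with hM
    have hMy : M ≤ y := by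
      have := ciInf_le hbdd 0
      simpa using this
    have hcM : c ≤ M := le_ciInf fun N => (hmem N).1.le
    have hMmem : M ∈ Icc c d := ⟨hcM, le_trans hMy (hsub hy).2⟩
    have h1 : Tendsto (fun N : ℕ => f (finv^[N+1] y)) atTop (nhds (f M)) := by
      refine (hcont M hMmem).tendsto.comp (tendsto_nhdsWithin_iff.mpr ⟨?_, ?_⟩)
      · exact hlim.comp (tendsto_add_atTop_nat 1)
      · exact Eventually.of_forall fun N => hsub (hmem (N + 1))
    have h2 : Tendsto (fun N : ℕ => f (finv^[N+1] y)) atTop (nhds M) := by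
      have heq : ∀ N : ℕ, f (finv^[N+1] y) = finv^[N] y := by
        intro N
        rw [Function.iterate_succ_apply', hfinv' _ (hsub (hmem N))]
      exact hlim.congr fun N => (heq N).symm
    have hfM : f M = M := tendsto_nhds_unique h1 h2
    have hMeq : M = c := by
      by_contra hne
      have hcM' : c < M := lt_of_le_of_ne hcM (Ne.symm hne)
      exact (hup M ⟨hcM', lt_of_le_of_lt hMy hy.2⟩).ne' hfM
    rwa [hMeq] at hlim
  -- the derivative is continuous on Icc c d
  have hUD : UniqueDiffOn ℝ (Icc c d) := uniqueDiffOn_Icc hcd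
  set D := derivWithin f (Icc c d) with hDdef
  have hD : ContinuousOn D (Icc c d) := hfs.continuousOn_derivWithin hUD (by simp)
  -- D c ≥ 1
  have hdiff : DifferentiableOn ℝ f (Icc c d) := hfs.differentiableOn (by simp)
  have hslope := hasDerivWithinAt_iff_tendsto_slope.mp (hdiff c hcI).hasDerivWithinAt
  have hNeBot : (nhdsWithin c (Icc c d \ {c})).NeBot := by
    have hsub2 : Ioc c d ⊆ Icc c d \ {c} := fun z hz => ⟨⟨hz.1.le, hz.2⟩, hz.1.ne'⟩
    refine mem_closure_iff_nhdsWithin_neBot.mp (closure_mono hsub2 ?_)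
    rw [closure_Ioc hcd.ne]
    exact hcI
  have hDc1 : 1 ≤ D c := by
    refine ge_of_tendsto hslope ?_
    filter_upwards [self_mem_nhdsWithin] with z hz
    have hz1 : c < z := lt_of_le_of_ne hz.1.1 (Ne.symm hz.2)
    have hfz : z ≤ f z := by
      rcases eq_or_lt_of_le hz.1.2 with h | h
      · rw [h, hfd]
      · exact (hup z ⟨hz1, h⟩).le
    have hslz : slope f c z = (f z - c) / (z - c) := by
      rw [slope_def_field, hfc]
    rw [hslz]
    exact (one_le_div (sub_pos.2 hz1)).mpr (by linarith)
  have hDc0 : D c ≠ 0 := by positivity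
  intro x hx
  have hfx : f x ∈ Ioo c d := hfIoo x hx
  -- the shift identity for zIter
  have hshift : ∀ n : ℤ, zIter f finv n (f x) = zIter f finv (n + 1) x := by
    intro n
    unfold zIter
    rcases le_or_gt 0 n with h | h
    · rw [if_pos h, if_pos (by omega)]
      have hn : (n + 1).toNat = n.toNat + 1 := by omega
      rw [hn, Function.iterate_succ_apply]
    · rw [if_neg (not_le.mpr h)]
      rcases eq_or_lt_of_le (by omega : n ≤ -1) with h1 | h1
      · rw [h1, if_pos (by omega)]
        have : ((-(-1) : ℤ)).toNat = 1 := by omega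
        rw [this, Function.iterate_one]
        simpa using hfinv x (hsub hx)
      · rw [if_neg (by omega)]
        have h2 : (-n).toNat = (-(n + 1)).toNat + 1 := by omega
        rw [h2, Function.iterate_succ_apply, hfinv x (hsub hx)]
  set u : ℤ → ℝ := fun n => D (zIter f finv n x) with hu
  set v : ℤ → ℝ := fun n => D (zIter f finv n a) with hv
  -- key per-N identity
  have key : ∀ N : ℕ,
      (∏ n ∈ Finset.Icc (-(N:ℤ)) (N:ℤ), D (zIter f finv n (f x)) / v n) * u (-(N:ℤ))
        = (∏ n ∈ Finset.Icc (-(N:ℤ)) (N:ℤ), u n / v n) * u ((N:ℤ) + 1) := by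
    intro N
    have h1 : ∀ n ∈ Finset.Icc (-(N:ℤ)) (N:ℤ),
        D (zIter f finv n (f x)) / v n = u (n + 1) / v n := fun n _ => by rw [hshift n]
    rw [Finset.prod_congr rfl h1, Finset.prod_div_distrib, Finset.prod_div_distrib]
    have e1 : ∏ n ∈ Finset.Icc (-(N:ℤ)) (N:ℤ), u (n + 1)
        = ∏ n ∈ Finset.Icc (-(N:ℤ) + 1) ((N:ℤ) + 1), u n := by
      rw [← Finset.map_add_right_Icc, Finset.prod_map]
      rfl
    have e2 : Finset.Icc (-(N:ℤ)) ((N:ℤ) + 1)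
        = insert (-(N:ℤ)) (Finset.Icc (-(N:ℤ) + 1) ((N:ℤ) + 1)) := by
      ext m
      simp only [Finset.mem_Icc, Finset.mem_insert]
      omega
    have e3 : Finset.Icc (-(N:ℤ)) ((N:ℤ) + 1)
        = insert ((N:ℤ) + 1) (Finset.Icc (-(N:ℤ)) (N:ℤ)) := by
      ext m
      simp only [Finset.mem_Icc, Finset.mem_insert]
      omega
    have h2 : u (-(N:ℤ)) * ∏ n ∈ Finset.Icc (-(N:ℤ)) (N:ℤ), u (n + 1)
        = u ((N:ℤ) + 1) * ∏ n ∈ Finset.Icc (-(N:ℤ)) (N:ℤ), u n := by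
      rw [e1, ← Finset.prod_insert (by simp : (-(N:ℤ)) ∉ Finset.Icc (-(N:ℤ) + 1) ((N:ℤ) + 1)),
        ← e2, e3, Finset.prod_insert (by simp : ((N:ℤ) + 1) ∉ Finset.Icc (-(N:ℤ)) (N:ℤ))]
    rw [div_mul_eq_mul_div, div_mul_eq_mul_div, mul_comm _ (u (-(N:ℤ))),
      mul_comm _ (u ((N:ℤ) + 1)), h2]
  -- limits of the endpoint factors
  have hu_neg : Tendsto (fun N : ℕ => u (-(N:ℤ))) atTop (nhds (D c)) := by
    have h0 : ∀ N : ℕ, u (-(N:ℤ)) = D (finv^[N] x) := by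
      intro N
      rcases Nat.eq_zero_or_pos N with h | h
      · subst h; simp [hu, zIter]
      · simp only [hu, zIter, if_neg (by omega : ¬ (0:ℤ) ≤ -(N:ℤ))]
        norm_num
    have h1 : Tendsto (fun N : ℕ => D (finv^[N] x)) atTop (nhds (D c)) :=
      (hD c hcI).tendsto.comp (tendsto_nhdsWithin_iff.mpr
        ⟨htend_c x hx, Eventually.of_forall fun N => hsub (hfik N x hx)⟩)
    exact h1.congr fun N => (h0 N).symm
  have hu_pos : Tendsto (fun N : ℕ => u ((N:ℤ) + 1)) atTop (nhds (D d)) := by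
    have h0 : ∀ N : ℕ, u ((N:ℤ) + 1) = D (f^[N + 1] x) := by
      intro N
      simp only [hu, zIter, if_pos (by omega : (0:ℤ) ≤ (N:ℤ) + 1)]
      norm_num
    have h1 : Tendsto (fun N : ℕ => D (f^[N + 1] x)) atTop (nhds (D d)) := by
      refine (hD d hdI).tendsto.comp (tendsto_nhdsWithin_iff.mpr ⟨?_, ?_⟩)
      · exact (htend_d x hx).comp (tendsto_add_atTop_nat 1)
      · exact Eventually.of_forall fun N => hsub (hfk (N + 1) x hx)
    exact h1.congr fun N => (h0 N).symm
  have hQ := hF (f x) hfx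
  have hP := hF x hx
  have hlim1 := hQ.mul hu_neg
  have hlim2 := hP.mul hu_pos
  have heq : F (f x) * D c = F x * D d := tendsto_nhds_unique (hlim1.congr key) hlim2
  rw [eq_div_iff hDc0]
  exact heq
end

section
/- Suppose f is a smooth diffeomorphism of [0,∞) with f(0)=0, f(x) < x for x > 0, and f'(0) = 1, and suppose φ is a C¹ diffeomorphism of [0,∞) commuting with f (φ ∘ f = f ∘ φ). Then φ'(0) = 1. -/
open Set Filter Topology

/-- If `f` is a smooth diffeomorphism of `[0,∞)` fixing only `0`, with `f x < x` on
`(0,∞)` and `f'(0) = 1`, then any C¹ diffeomorphism `φ` of `[0,∞)` commuting with `f`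
has `φ'(0) = 1`. -/
theorem stmt_10 (f φ : ℝ → ℝ)
    (hfs : ContDiffOn ℝ (⊤ : ℕ∞) f (Ici 0))
    (hfb : BijOn f (Ici 0) (Ici 0))
    (hfm : StrictMonoOn f (Ici 0))
    (hf0 : f 0 = 0)
    (hneg : ∀ x > (0:ℝ), f x < x)
    (hpos : ∀ x > (0:ℝ), 0 < f x)
    (hfd0 : derivWithin f (Ici 0) 0 = 1)
    (hφs : ContDiffOn ℝ 1 φ (Ici 0))
    (hφb : BijOn φ (Ici 0) (Ici 0))
    (hφm : StrictMonoOn φ (Ici 0))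
    (hφd : ∀ x ∈ Ici (0:ℝ), derivWithin φ (Ici 0) x ≠ 0)
    (hcomm : ∀ x ∈ Ici (0:ℝ), φ (f x) = f (φ x)) :
    derivWithin φ (Ici 0) 0 = 1 := by
  -- φ fixes 0
  have hφ0 : φ 0 = 0 := by
    have h0 : φ 0 ∈ Ici (0:ℝ) := hφb.mapsTo self_mem_Ici
    rcases eq_or_lt_of_le (show (0:ℝ) ≤ φ 0 from h0) with h | h
    · exact h.symm
    · obtain ⟨y, hy, hyeq⟩ := hφb.surjOn (show φ 0 / 2 ∈ Ici (0:ℝ) by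
        simp only [mem_Ici]; linarith)
      have : φ 0 ≤ φ y := hφm.monotoneOn self_mem_Ici hy hy
      rw [hyeq] at this; linarith
  -- the orbit sequence
  set x : ℕ → ℝ := fun n => f^[n] 1 with hxdef
  have hxsucc : ∀ n, x (n + 1) = f (x n) := by
    intro n; simp [hxdef, Function.iterate_succ_apply']
  have hxpos : ∀ n, 0 < x n := by
    intro n; induction n with
    | zero => simp [hxdef]
    | succ k ih => rw [hxsucc]; exact hpos _ ih
  have hxmem : ∀ n, x n ∈ Ici (0:ℝ) := fun n => (hxpos n).le
  have hxanti : StrictAnti x :=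
    strictAnti_nat_of_succ_lt fun n => by rw [hxsucc]; exact hneg _ (hxpos n)
  -- the orbit converges to 0
  have hbdd : BddBelow (range x) := ⟨0, fun y ⟨n, hn⟩ => hn ▸ (hxpos n).le⟩
  have hlimL : Tendsto x atTop (𝓝 (⨅ n, x n)) := tendsto_atTop_ciInf hxanti.antitone hbdd
  have hL0 : (0:ℝ) ≤ ⨅ n, x n := le_ciInf fun n => (hxpos n).le
  have hxlim : Tendsto x atTop (𝓝 0) := by
    set L := ⨅ n, x n with hLdef
    have hxL : Tendsto x atTop (𝓝[Ici 0] L) :=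
      tendsto_nhdsWithin_of_tendsto_nhds_of_eventually_within x hlimL
        (Eventually.of_forall hxmem)
    have h1 : Tendsto (fun n => x (n + 1)) atTop (𝓝 L) :=
      hlimL.comp (tendsto_add_atTop_nat 1)
    have h2 : Tendsto (fun n => f (x n)) atTop (𝓝 (f L)) :=
      ((hfs.continuousOn.continuousWithinAt hL0).tendsto).comp hxL
    have hfL : f L = L := by
      refine tendsto_nhds_unique ?_ h1
      exact h2.congr fun n => (hxsucc n).symm
    rcases eq_or_lt_of_le hL0 with h | h
    · rwa [← h] at hlimL
    · exact absurd hfL (ne_of_lt (hneg L h))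
  -- commutation with iterates
  have hφmem : ∀ a ∈ Ici (0:ℝ), φ a ∈ Ici (0:ℝ) := fun a ha => hφb.mapsTo ha
  have hfmem : ∀ a ∈ Ici (0:ℝ), f a ∈ Ici (0:ℝ) := fun a ha => hfb.mapsTo ha
  have hitmem : ∀ n, ∀ a ∈ Ici (0:ℝ), f^[n] a ∈ Ici (0:ℝ) := by
    intro n; induction n with
    | zero => intro a ha; simpa using ha
    | succ k ih => intro a ha; rw [Function.iterate_succ_apply']; exact hfmem _ (ih a ha)
  have hcommit : ∀ n, ∀ a ∈ Ici (0:ℝ), φ (f^[n] a) = f^[n] (φ a) := by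
    intro n; induction n with
    | zero => intro a _; simp
    | succ k ih =>
      intro a ha
      rw [Function.iterate_succ_apply, ih (f a) (hfmem a ha), hcomm a ha,
        ← Function.iterate_succ_apply]
  have hitmono : ∀ n, ∀ a ∈ Ici (0:ℝ), ∀ b ∈ Ici (0:ℝ), a ≤ b → f^[n] a ≤ f^[n] b := by
    intro n; induction n with
    | zero => intro a _ b _ h; simpa using h
    | succ k ih =>
      intro a ha b hb h
      rw [Function.iterate_succ_apply', Function.iterate_succ_apply']
      exact hfm.monotoneOn (hitmem k a ha) (hitmem k b hb) (ih a ha b hb h)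
  -- ratio of successive terms tends to 1
  have hxlim' : Tendsto x atTop (𝓝[Ici 0 \ {0}] 0) :=
    tendsto_nhdsWithin_of_tendsto_nhds_of_eventually_within x hxlim
      (Eventually.of_forall fun n => ⟨hxmem n, ne_of_gt (hxpos n)⟩)
  have hdf : HasDerivWithinAt f 1 (Ici 0) 0 := by
    have := (hfs.differentiableOn (by simp) 0 self_mem_Ici).hasDerivWithinAt
    rwa [hfd0] at this
  have hslopef : Tendsto (fun y => f y / y) (𝓝[Ici 0 \ {0}] 0) (𝓝 1) := by
    have h := hasDerivWithinAt_iff_tendsto_slope.mp hdf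
    refine h.congr fun y => ?_
    simp [slope_def_field, hf0]
  have hr1 : Tendsto (fun n => x (n + 1) / x n) atTop (𝓝 1) := by
    have := hslopef.comp hxlim'
    refine this.congr fun n => ?_
    simp only [Function.comp_apply, hxsucc n]
  have hrj : ∀ j : ℕ, Tendsto (fun n => x (n + j) / x n) atTop (𝓝 1) := by
    intro j; induction j with
    | zero =>
      refine tendsto_const_nhds.congr fun n => ?_
      simp [div_self (ne_of_gt (hxpos n))]
    | succ k ih =>
      have h1 : Tendsto (fun n => x (n + k + 1) / x (n + k)) atTop (𝓝 1) :=
        hr1.comp (tendsto_add_atTop_nat k)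
      have := h1.mul ih
      rw [one_mul] at this
      refine this.congr fun n => ?_
      rw [div_mul_div_comm]
      rw [show n + (k + 1) = n + k + 1 by ring]
      rw [mul_comm (x (n + k)) (x n), ← div_mul_div_comm,
        div_self (ne_of_gt (hxpos (n + k))), mul_one]
  -- choose bracketing indices
  have hφc : Tendsto (fun n => φ (x n)) atTop (𝓝 0) := by
    have : Tendsto x atTop (𝓝[Ici 0] 0) :=
      tendsto_nhdsWithin_of_tendsto_nhds_of_eventually_within x hxlim
        (Eventually.of_forall hxmem)
    have h := ((hφs.continuousOn.continuousWithinAt self_mem_Ici).tendsto).comp this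
    rwa [hφ0] at h
  obtain ⟨l, hl⟩ : ∃ l, φ (x l) < 1 := ((hφc.eventually (gt_mem_nhds one_pos)).exists)
  have hφxl : 0 < φ (x l) := by
    have := hφm self_mem_Ici (hxmem l) (hxpos l)
    rwa [hφ0] at this
  obtain ⟨m, hm⟩ : ∃ m, x m < φ (x l) :=
    ((hxlim.eventually (gt_mem_nhds hφxl)).exists)
  -- the sandwich
  have hbracket : ∀ n, x (n + m) ≤ φ (x (n + l)) ∧ φ (x (n + l)) ≤ x n := by
    intro n
    have hxl : x (n + l) = f^[n] (x l) := Function.iterate_add_apply f n l 1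
    have hxm : x (n + m) = f^[n] (x m) := Function.iterate_add_apply f n m 1
    have hxn : x n = f^[n] 1 := rfl
    have hφeq : φ (x (n + l)) = f^[n] (φ (x l)) := by
      rw [hxl]; exact hcommit n (x l) (hxmem l)
    constructor
    · rw [hxm, hφeq]
      exact hitmono n _ (hxmem m) _ (hφmem _ (hxmem l)) hm.le
    · rw [hxn, hφeq]
      exact hitmono n _ (hφmem _ (hxmem l)) _ (by norm_num) hl.le
  -- slope of φ along the orbit tends to the derivative
  have hdφ : HasDerivWithinAt φ (derivWithin φ (Ici 0) 0) (Ici 0) 0 :=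
    (hφs.differentiableOn one_ne_zero 0 self_mem_Ici).hasDerivWithinAt
  have hslopeφ : Tendsto (fun n => φ (x (n + l)) / x (n + l)) atTop
      (𝓝 (derivWithin φ (Ici 0) 0)) := by
    have h := (hasDerivWithinAt_iff_tendsto_slope.mp hdφ).comp
      (hxlim'.comp (tendsto_add_atTop_nat l))
    refine h.congr fun n => ?_
    simp [slope_def_field, hφ0]
  -- squeeze
  have hA : Tendsto (fun n => φ (x (n + l)) / x n) atTop (𝓝 1) := by
    refine tendsto_of_tendsto_of_tendsto_of_le_of_le (hrj m) tendsto_const_nhds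
      (fun n => ?_) (fun n => ?_)
    · exact (div_le_div_iff_of_pos_right (hxpos n)).mpr (hbracket n).1
    · exact (div_le_one (hxpos n)).mpr (hbracket n).2
  have hB : Tendsto (fun n => x n / x (n + l)) atTop (𝓝 1) := by
    have := (hrj l).inv₀ one_ne_zero
    rw [inv_one] at this
    refine this.congr fun n => ?_
    rw [inv_div]
  have hfinal : Tendsto (fun n => φ (x (n + l)) / x (n + l)) atTop (𝓝 1) := by
    have := hA.mul hB
    rw [one_mul] at this
    refine this.congr fun n => ?_
    rw [div_mul_div_comm, mul_comm (x n) (x (n + l)), ← div_mul_div_comm,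
      div_self (ne_of_gt (hxpos n)), mul_one]
  exact tendsto_nhds_unique hslopeφ hfinal
end

section
/- Let f be a smooth diffeomorphism of [0,∞) fixing only 0, with f(x)<x on (0,∞), and suppose the Taylor series of f at 0 is X + bX^{p+1} + ⋯ for some p ∈ ℕ and b ≠ 0. Then for x₀ > 0 small and any y with f(x₀) ≤ y ≤ x₀, the product ∏_{n=0}^∞ f'(fⁿ(x₀))/f'(fⁿ(y)) is 1 + O(x₀^p) as x₀ → 0⁺, uniformly in y. -/
open Set Filter Asymptotics
open scoped Nat

private lemma const_zero_of_le_linear {c A ε : ℝ} (hε : 0 < ε)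
    (h : ∀ x ∈ Ioc (0:ℝ) ε, |c| ≤ A * x) : c = 0 := by
  have hev : ∀ᶠ x in nhdsWithin (0:ℝ) (Ioi 0), |c| ≤ A * x := by
    filter_upwards [Ioc_mem_nhdsGT_of_mem ⟨le_refl (0:ℝ), hε⟩] with x hx using h x hx
  have ht : Tendsto (fun x : ℝ => A * x) (nhdsWithin 0 (Ioi 0)) (nhds 0) := by
    have h2 : Tendsto (fun x : ℝ => A * x) (nhds 0) (nhds (A * 0)) :=
      (continuous_const.mul continuous_id).tendsto 0
    simpa using h2.mono_left nhdsWithin_le_nhds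
  have : |c| ≤ 0 := ge_of_tendsto ht hev
  exact abs_eq_zero.mp (le_antisymm this (abs_nonneg c))

private lemma poly_vanish : ∀ (m : ℕ) (d : ℕ → ℝ) (M ε : ℝ), 0 < ε →
    (∀ x ∈ Ioc (0:ℝ) ε, |∑ j ∈ Finset.range (m+1), d j * x^j| ≤ M * x^(m+1)) →
    ∀ j ≤ m, d j = 0 := by
  intro m
  induction m with
  | zero =>
    intro d M ε hε h j hj
    interval_cases j
    refine const_zero_of_le_linear (A := M) hε (fun x hx => ?_)
    calc |d 0| = |∑ j ∈ Finset.range 1, d j * x^j| := by simp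
    _ ≤ M * x^1 := h x hx
    _ = M * x := by ring
  | succ m ih =>
    intro d M ε hε h j hj
    set B : ℝ := ∑ j ∈ Finset.range (m+1), |d (j+1)| with hB
    have key : ∀ x : ℝ, ∑ j ∈ Finset.range (m+2), d j * x^j
        = d 0 + x * ∑ j ∈ Finset.range (m+1), d (j+1) * x^j := by
      intro x
      rw [Finset.sum_range_succ', Finset.mul_sum]
      have : ∀ i ∈ Finset.range (m+1), d (i+1) * x^(i+1) = x * (d (i+1) * x^i) := by
        intro i _; ring
      rw [Finset.sum_congr rfl this]
      ring
    have hTB : ∀ x : ℝ, 0 < x → x ≤ 1 → |∑ j ∈ Finset.range (m+1), d (j+1) * x^j| ≤ B := by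
      intro x hx0 hx1
      refine (Finset.abs_sum_le_sum_abs _ _).trans ?_
      apply Finset.sum_le_sum
      intro i _
      rw [abs_mul]
      calc |d (i+1)| * |x^i| ≤ |d (i+1)| * 1 := by
            apply mul_le_mul_of_nonneg_left _ (abs_nonneg _)
            rw [abs_pow]
            exact pow_le_one₀ (abs_nonneg x) (by rw [abs_of_pos hx0]; exact hx1)
      _ = |d (i+1)| := mul_one _
    have hd0 : d 0 = 0 := by
      refine const_zero_of_le_linear (A := |M| + B) (lt_min hε one_pos) (fun x hx => ?_)
      have hx1 : x ≤ 1 := hx.2.trans (min_le_right _ _)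
      have hxε : x ∈ Ioc (0:ℝ) ε := ⟨hx.1, hx.2.trans (min_le_left _ _)⟩
      have h1 : d 0 = (∑ j ∈ Finset.range (m+2), d j * x^j)
          - x * ∑ j ∈ Finset.range (m+1), d (j+1) * x^j := by
        rw [key x]; ring
      rw [h1]
      refine (abs_sub _ _).trans ?_
      have e1 : |∑ j ∈ Finset.range (m+2), d j * x^j| ≤ |M| * x := by
        refine (h x hxε).trans ?_
        calc M * x^(m+2) ≤ |M| * x^(m+2) :=
              mul_le_mul_of_nonneg_right (le_abs_self M) (pow_nonneg hx.1.le _)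
        _ ≤ |M| * x^1 := by
              apply mul_le_mul_of_nonneg_left _ (abs_nonneg M)
              exact pow_le_pow_of_le_one hx.1.le hx1 (by omega)
        _ = |M| * x := by ring
      have e2 : |x * ∑ j ∈ Finset.range (m+1), d (j+1) * x^j| ≤ B * x := by
        rw [abs_mul, abs_of_pos hx.1]
        rw [mul_comm]
        exact mul_le_mul_of_nonneg_right (hTB x hx.1 hx1) hx.1.le
      linarith
    have hshift : ∀ j ≤ m, d (j+1) = 0 := by
      refine ih (fun j => d (j+1)) M ε hε (fun x hx => ?_)
      have h2 := h x hx
      rw [key x, hd0, zero_add, abs_mul, abs_of_pos hx.1] at h2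
      have : x * |∑ j ∈ Finset.range (m+1), d (j+1) * x^j| ≤ x * (M * x^(m+1)) := by
        calc x * |∑ j ∈ Finset.range (m+1), d (j+1) * x^j| ≤ M * x^(m+2) := h2
        _ = x * (M * x^(m+1)) := by ring
      exact le_of_mul_le_mul_left this hx.1
    rcases Nat.eq_zero_or_pos j with rfl | hj0
    · exact hd0
    · obtain ⟨i, rfl⟩ := Nat.exists_eq_add_of_lt hj0
      simp only [zero_add] at *
      exact hshift i (by omega)

private lemma coeffs (f : ℝ → ℝ) (p : ℕ) (hp : 1 ≤ p) (b : ℝ)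
    (hfs : ContDiffOn ℝ (⊤ : ℕ∞) f (Ici 0))
    (htaylor : (fun x => f x - (x + b * x ^ (p + 1)))
      =O[nhdsWithin 0 (Ioi 0)] fun x => x ^ (p + 2)) :
    ∀ k ≤ p + 1, iteratedDerivWithin k f (Icc (0:ℝ) 1) 0
      = (if k = 1 then 1 else if k = p+1 then b else 0) * (k ! : ℝ) := by
  have hfu : ContDiffOn ℝ (p+2 : ℕ) f (Icc (0:ℝ) 1) :=
    (hfs.mono (Icc_subset_Ici_self)).of_le (WithTop.coe_le_coe.mpr le_top)
  obtain ⟨M₀, hM₀⟩ := exists_taylor_mean_remainder_bound (by norm_num : (0:ℝ) ≤ 1)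
    (by exact_mod_cast hfu : ContDiffOn ℝ ((p+1)+1 : ℕ) f (Icc (0:ℝ) 1))
  obtain ⟨M₁, hM₁⟩ := htaylor.bound
  obtain ⟨ε₁, hε₁pos, hε₁⟩ : ∃ ε₁ > 0, ∀ x ∈ Ioc (0:ℝ) ε₁,
      ‖f x - (x + b * x ^ (p+1))‖ ≤ M₁ * ‖x ^ (p+2)‖ := by
    rw [eventually_iff, mem_nhdsGT_iff_exists_Ioc_subset] at hM₁
    obtain ⟨u, hu0, huss⟩ := hM₁
    exact ⟨u, hu0, fun x hx => huss hx⟩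
  set c : ℕ → ℝ := fun k => iteratedDerivWithin k f (Icc (0:ℝ) 1) 0 with hc
  set e : ℕ → ℝ := fun k => if k = 1 then 1 else if k = p+1 then b else 0 with he
  set d : ℕ → ℝ := fun k => (k ! : ℝ)⁻¹ * c k - e k with hd
  -- the e-sum identity
  have hesum : ∀ x : ℝ, ∑ k ∈ Finset.range (p+2), e k * x^k = x + b * x^(p+1) := by
    intro x
    have h1 : ∀ k, e k * x^k
        = (if k = 1 then x else 0) + (if k = p+1 then b * x^(p+1) else 0) := by
      intro k
      by_cases h1 : k = 1
      · subst h1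
        have : (1:ℕ) ≠ p + 1 := by omega
        simp [he, this, show p ≠ 0 by omega]
      · by_cases h2 : k = p+1
        · subst h2; simp [he, h1, show p ≠ 0 by omega]
        · simp [he, h1, h2]
    simp_rw [h1]
    rw [Finset.sum_add_distrib, Finset.sum_ite_eq' (Finset.range (p+2)) 1 (fun _ => x),
      Finset.sum_ite_eq' (Finset.range (p+2)) (p+1) (fun _ => b * x^(p+1))]
    have m1 : (1:ℕ) ∈ Finset.range (p+2) := by simp only [Finset.mem_range]; omega
    have m2 : p+1 ∈ Finset.range (p+2) := by simp only [Finset.mem_range]; omega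
    rw [if_pos m1, if_pos m2]
  -- Taylor sum identity
  have htsum : ∀ x : ℝ, taylorWithinEval f (p+1) (Icc (0:ℝ) 1) 0 x
      = ∑ k ∈ Finset.range (p+2), ((k ! : ℝ)⁻¹ * c k) * x^k := by
    intro x
    rw [taylor_within_apply]
    apply Finset.sum_congr rfl
    intro k _
    rw [smul_eq_mul]
    ring_nf
    rfl
  -- main bound on d-polynomial
  have hdkey : ∀ x ∈ Ioc (0:ℝ) (min ε₁ 1), |∑ k ∈ Finset.range (p+2), d k * x^k|
      ≤ (M₀ + M₁) * x^(p+2) := by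
    intro x hx
    have hx1 : x ∈ Icc (0:ℝ) 1 := ⟨hx.1.le, hx.2.trans (min_le_right _ _)⟩
    have hxε : x ∈ Ioc (0:ℝ) ε₁ := ⟨hx.1, hx.2.trans (min_le_left _ _)⟩
    have hsplit : ∑ k ∈ Finset.range (p+2), d k * x^k
        = (taylorWithinEval f (p+1) (Icc (0:ℝ) 1) 0 x - f x)
          + (f x - (x + b * x^(p+1))) := by
      have step1 : ∑ k ∈ Finset.range (p+2), d k * x^k
          = ∑ k ∈ Finset.range (p+2), ((k ! : ℝ)⁻¹ * c k * x^k - e k * x^k) := by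
        apply Finset.sum_congr rfl
        intro k _
        simp only [hd]
        ring
      rw [step1, Finset.sum_sub_distrib, ← htsum, ← hesum x]
      ring
    rw [hsplit]
    refine (abs_add_le _ _).trans ?_
    have b1 := hM₀ x hx1
    rw [Real.norm_eq_abs, sub_zero] at b1
    have b2 := hε₁ x hxε
    rw [Real.norm_eq_abs, Real.norm_eq_abs, abs_of_pos (pow_pos hx.1 _)] at b2
    have b1' : |taylorWithinEval f (p+1) (Icc (0:ℝ) 1) 0 x - f x| ≤ M₀ * x^(p+2) := by
      rw [abs_sub_comm]; exact_mod_cast b1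
    linarith
  have hvan := poly_vanish (p+1) d (M₀ + M₁) (min ε₁ 1) (lt_min hε₁pos one_pos) hdkey
  intro k hk
  have h0 : (k ! : ℝ)⁻¹ * c k - e k = 0 := hvan k hk
  have h0' : (k ! : ℝ)⁻¹ * c k = e k := sub_eq_zero.mp h0
  have hfact : (k ! : ℝ) ≠ 0 := Nat.cast_ne_zero.mpr (Nat.factorial_ne_zero k)
  have h1 : c k = e k * (k ! : ℝ) := by
    rw [← h0']
    field_simp
  exact h1

private lemma aux_congr_set {f : ℝ → ℝ} {s t : Set ℝ} {x : ℝ} (h : s =ᶠ[nhds x] t) (n : ℕ) :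
    iteratedDerivWithin n f s x = iteratedDerivWithin n f t x := by
  simp only [iteratedDerivWithin_eq_iteratedFDerivWithin, iteratedFDerivWithin_congr_set h]

private lemma ici_icc_eventually : (Ici (0:ℝ)) =ᶠ[nhds (0:ℝ)] (Icc (0:ℝ) 1) := by
  filter_upwards [Ioo_mem_nhds (by norm_num : (-1:ℝ) < 0) (by norm_num : (0:ℝ) < 1)] with y hy
  simp only [mem_Ici, mem_Icc, eq_iff_iff]
  exact ⟨fun h => ⟨h, hy.2.le⟩, fun h => h.1⟩

private lemma deriv_facts (f : ℝ → ℝ) (p : ℕ) (hp : 1 ≤ p) (b : ℝ)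
    (hfs : ContDiffOn ℝ (⊤ : ℕ∞) f (Ici 0))
    (htaylor : (fun x => f x - (x + b * x ^ (p + 1)))
      =O[nhdsWithin 0 (Ioi 0)] fun x => x ^ (p + 2)) :
    derivWithin f (Ici 0) 0 = 1 ∧
    ∃ M₂ ≥ 0, ∀ x ∈ Icc (0:ℝ) 1,
      |derivWithin (derivWithin f (Ici 0)) (Ici 0) x| ≤ M₂ * x^(p-1) := by
  have hs : UniqueDiffOn ℝ (Ici (0:ℝ)) := uniqueDiffOn_Ici 0
  have hu : UniqueDiffOn ℝ (Icc (0:ℝ) 1) := uniqueDiffOn_Icc one_pos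
  have hmem : (0:ℝ) ∈ Ici (0:ℝ) := self_mem_Ici
  have hC := coeffs f p hp b hfs htaylor
  have hCs : ∀ k ≤ p + 1, iteratedDerivWithin k f (Ici (0:ℝ)) 0
      = (if k = 1 then 1 else if k = p+1 then b else 0) * (k ! : ℝ) := by
    intro k hk
    rw [aux_congr_set ici_icc_eventually k]
    exact hC k hk
  set F1 := derivWithin f (Ici (0:ℝ)) with hF1
  set F2 := derivWithin F1 (Ici (0:ℝ)) with hF2
  have hF1s : ContDiffOn ℝ (⊤ : ℕ∞) F1 (Ici (0:ℝ)) := hfs.derivWithin hs (by simp)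
  have hF2s : ContDiffOn ℝ (⊤ : ℕ∞) F2 (Ici (0:ℝ)) := hF1s.derivWithin hs (by simp)
  have hF10 : F1 0 = 1 := by
    have h1 := hCs 1 (by omega)
    rw [iteratedDerivWithin_one] at h1
    have : (1:ℕ) ≠ p + 1 := by omega
    simpa [this] using h1
  refine ⟨hF10, ?_⟩
  have hF2iter : ∀ j, iteratedDerivWithin j F2 (Ici (0:ℝ)) 0
      = iteratedDerivWithin (j+2) f (Ici (0:ℝ)) 0 := by
    intro j
    rw [show j + 2 = (j+1)+1 from rfl, iteratedDerivWithin_succ',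
      iteratedDerivWithin_succ']
  have hF2zero : ∀ j, j + 2 ≤ p → iteratedDerivWithin j F2 (Ici (0:ℝ)) 0 = 0 := by
    intro j hj
    rw [hF2iter j, hCs (j+2) (by omega)]
    have h1 : j + 2 ≠ 1 := by omega
    have h2 : j + 2 ≠ p + 1 := by omega
    simp [h1, h2]
  -- case split on p
  obtain ⟨q, rfl⟩ : ∃ q, p = q + 1 := ⟨p - 1, by omega⟩
  simp only [Nat.add_sub_cancel]
  match q with
  | 0 =>
    obtain ⟨M₂, hM₂⟩ := (isCompact_Icc (a := (0:ℝ)) (b := 1)).exists_bound_of_continuousOn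
      ((hF2s.continuousOn).mono Icc_subset_Ici_self)
    refine ⟨max M₂ 0, le_max_right _ _, fun x hx => ?_⟩
    rw [pow_zero, mul_one]
    exact (hM₂ x hx).trans (le_max_left _ _)
  | (r+1) =>
    have hF2u : ContDiffOn ℝ (r+1 : ℕ) F2 (Icc (0:ℝ) 1) :=
      (hF2s.mono Icc_subset_Ici_self).of_le (by exact_mod_cast le_top)
    obtain ⟨M₂, hM₂⟩ := exists_taylor_mean_remainder_bound (by norm_num : (0:ℝ) ≤ 1) hF2u
    have hT0 : ∀ x : ℝ, taylorWithinEval F2 r (Icc (0:ℝ) 1) 0 x = 0 := by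
      intro x
      rw [taylor_within_apply]
      apply Finset.sum_eq_zero
      intro j hj
      have hj' : j ≤ r := by simpa [Nat.lt_succ_iff] using hj
      have : iteratedDerivWithin j F2 (Icc (0:ℝ) 1) 0 = 0 := by
        rw [← aux_congr_set ici_icc_eventually j]
        exact hF2zero j (by omega)
      rw [this, smul_zero]
    refine ⟨max M₂ 0, le_max_right _ _, fun x hx => ?_⟩
    have h1 := hM₂ x hx
    rw [hT0 x, sub_zero, sub_zero, Real.norm_eq_abs] at h1
    calc |F2 x| ≤ M₂ * x^(r+1) := h1
    _ ≤ max M₂ 0 * x^(r+1) :=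
        mul_le_mul_of_nonneg_right (le_max_left _ _) (pow_nonneg hx.1 _)

/-- Quantitative Kopell estimate: if `f` is a smooth diffeomorphism of `[0,∞)` fixing
only `0`, with `f x < x` on `(0,∞)` and `T₀f = X + bX^{p+1} + ⋯` with `b ≠ 0`, then
for small `x₀ > 0` and any `y ∈ [f x₀, x₀]` the product
`∏_{n≥0} f'(fⁿ(x₀))/f'(fⁿ(y))` is `1 + O(x₀^p)` uniformly in `y`. -/
theorem stmt_15 (f : ℝ → ℝ) (p : ℕ) (hp : 1 ≤ p) (b : ℝ) (hb : b ≠ 0)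
    (hfs : ContDiffOn ℝ (⊤ : ℕ∞) f (Ici 0))
    (hfb : BijOn f (Ici 0) (Ici 0))
    (hfm : StrictMonoOn f (Ici 0))
    (hf0 : f 0 = 0)
    (hneg : ∀ x > (0:ℝ), f x < x)
    (hpos : ∀ x > (0:ℝ), 0 < f x)
    (htaylor : (fun x => f x - (x + b * x ^ (p + 1)))
      =O[nhdsWithin 0 (Ioi 0)] fun x => x ^ (p + 2)) :
    ∃ C > (0:ℝ), ∃ δ > (0:ℝ), ∀ x₀ : ℝ, 0 < x₀ → x₀ < δ →
      ∀ y : ℝ, f x₀ ≤ y → y ≤ x₀ →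
        ∃ L : ℝ,
          Tendsto (fun N => ∏ n ∈ Finset.range N,
              derivWithin f (Ici 0) (f^[n] x₀) / derivWithin f (Ici 0) (f^[n] y))
            atTop (nhds L) ∧
          |L - 1| ≤ C * x₀ ^ p := by
  obtain ⟨hF10, M₂, hM₂0, hM₂⟩ := deriv_facts f p hp b hfs htaylor
  have hs : UniqueDiffOn ℝ (Ici (0:ℝ)) := uniqueDiffOn_Ici 0
  set F1 := derivWithin f (Ici (0:ℝ)) with hF1def
  set F2 := derivWithin F1 (Ici (0:ℝ)) with hF2def
  have hF1s : ContDiffOn ℝ (⊤ : ℕ∞) F1 (Ici (0:ℝ)) := hfs.derivWithin hs (by simp)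
  have hF1diff : DifferentiableOn ℝ F1 (Ici (0:ℝ)) := hF1s.differentiableOn (by simp)
  -- F1 ≥ 1/2 on [0, δ₁]
  obtain ⟨δ₁, hδ₁pos, hδ₁le, hδ₁⟩ : ∃ δ₁ > (0:ℝ), δ₁ ≤ 1 ∧
      ∀ x ∈ Icc (0:ℝ) δ₁, (1:ℝ)/2 ≤ F1 x := by
    have hcont : ContinuousWithinAt F1 (Ici (0:ℝ)) 0 :=
      hF1s.continuousOn.continuousWithinAt self_mem_Ici
    have hev : ∀ᶠ x in nhdsWithin (0:ℝ) (Ici 0), (1:ℝ)/2 < F1 x := by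
      have : Ioi ((1:ℝ)/2) ∈ nhds (F1 0) := by
        rw [hF10]; exact Ioi_mem_nhds (by norm_num)
      exact hcont this
    rw [eventually_iff, mem_nhdsGE_iff_exists_Icc_subset] at hev
    obtain ⟨u, hu0, huss⟩ := hev
    refine ⟨min u 1, lt_min hu0 one_pos, min_le_right _ _, fun x hx => ?_⟩
    have : x ∈ Icc (0:ℝ) u := ⟨hx.1, hx.2.trans (min_le_left _ _)⟩
    exact (huss this).le
  -- key mean value estimate
  have hkey : ∀ u v : ℝ, 0 ≤ u → u ≤ v → v ≤ δ₁ →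
      |Real.log (F1 v) - Real.log (F1 u)| ≤ (2*M₂) * v^(p-1) * (v - u) := by
    intro u v hu0 huv hvδ₁
    rcases eq_or_lt_of_le (hu0.trans huv) with hv0 | hv0
    · have hu : u = 0 := le_antisymm (huv.trans hv0.symm.le) hu0
      rw [← hv0, hu]
      simp
    · have hsub : Icc (0:ℝ) v ⊆ Ici 0 := Icc_subset_Ici_self
      have hF1pos : ∀ z ∈ Icc (0:ℝ) v, (0:ℝ) < F1 z := by
        intro z hz
        have : (1:ℝ)/2 ≤ F1 z := hδ₁ z ⟨hz.1, hz.2.trans hvδ₁⟩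
        linarith
      have hderiv : ∀ z ∈ Icc (0:ℝ) v,
          HasDerivWithinAt (fun t => Real.log (F1 t)) (F2 z / F1 z) (Icc 0 v) z := by
        intro z hz
        have h1 : HasDerivWithinAt F1 (F2 z) (Ici 0) z :=
          (hF1diff z (hsub hz)).hasDerivWithinAt
        exact (h1.log (ne_of_gt (hF1pos z hz))).mono hsub
      have hdiff : DifferentiableOn ℝ (fun t => Real.log (F1 t)) (Icc (0:ℝ) v) :=
        fun z hz => (hderiv z hz).differentiableWithinAt
      have hbound : ∀ z ∈ Icc (0:ℝ) v,
          ‖derivWithin (fun t => Real.log (F1 t)) (Icc (0:ℝ) v) z‖ ≤ (2*M₂) * v^(p-1) := by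
        intro z hz
        rw [(hderiv z hz).derivWithin ((uniqueDiffOn_Icc hv0) z hz)]
        rw [Real.norm_eq_abs, abs_div, abs_of_pos (hF1pos z hz)]
        have hF1z : (1:ℝ)/2 ≤ F1 z := hδ₁ z ⟨hz.1, hz.2.trans hvδ₁⟩
        have hz1 : z ∈ Icc (0:ℝ) 1 := ⟨hz.1, hz.2.trans (hvδ₁.trans hδ₁le)⟩
        have h2 : |F2 z| ≤ M₂ * z^(p-1) := hM₂ z hz1
        have h3 : |F2 z| / F1 z ≤ |F2 z| / (1/2) :=
          div_le_div_of_nonneg_left (abs_nonneg _) one_half_pos hF1z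
        have h4 : |F2 z| / (1/2) = 2 * |F2 z| := by ring
        have h5 : z^(p-1) ≤ v^(p-1) := pow_le_pow_left₀ hz.1 hz.2 _
        calc |F2 z| / F1 z ≤ 2 * |F2 z| := by rw [← h4]; exact h3
        _ ≤ 2 * (M₂ * z^(p-1)) := by linarith
        _ ≤ 2 * (M₂ * v^(p-1)) := by
            have := mul_le_mul_of_nonneg_left h5 hM₂0
            linarith
        _ = (2*M₂) * v^(p-1) := by ring
      have := Convex.norm_image_sub_le_of_norm_derivWithin_le hdiff hbound
        (convex_Icc _ _) (⟨hu0, huv⟩ : u ∈ Icc (0:ℝ) v)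
        (⟨hu0.trans huv, le_refl v⟩ : v ∈ Icc (0:ℝ) v)
      rw [Real.norm_eq_abs, Real.norm_eq_abs, abs_of_nonneg (sub_nonneg.mpr huv)] at this
      exact this
  refine ⟨4*M₂ + 1, by positivity, min δ₁ (1/(2*M₂+1)), by positivity, ?_⟩
  intro x₀ hx₀ hx₀δ y hy1 hy2
  have hx₀δ₁ : x₀ < δ₁ := lt_of_lt_of_le hx₀δ (min_le_left _ _)
  have hx₀1 : x₀ ≤ 1 := (hx₀δ₁.le.trans hδ₁le)
  have hx₀M : x₀ ≤ 1/(2*M₂+1) := (lt_of_lt_of_le hx₀δ (min_le_right _ _)).le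
  set X : ℕ → ℝ := fun n => f^[n] x₀ with hXdef
  set Y : ℕ → ℝ := fun n => f^[n] y with hYdef
  have hX : ∀ n, 0 < X n ∧ X (n+1) ≤ X n ∧ X n ≤ x₀ := by
    intro n
    induction n with
    | zero =>
      refine ⟨hx₀, ?_, le_refl _⟩
      simp only [hXdef, Function.iterate_one, Function.iterate_zero, id_eq]
      exact (hneg x₀ hx₀).le
    | succ n ih =>
      obtain ⟨h1, h2, h3⟩ := ih
      have e1 : X (n+1) = f (X n) := Function.iterate_succ_apply' f n x₀
      have e2 : X (n+2) = f (X (n+1)) := Function.iterate_succ_apply' f (n+1) x₀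
      have p1 : 0 < X (n+1) := by rw [e1]; exact hpos _ h1
      refine ⟨p1, ?_, h2.trans h3⟩
      rw [e2]; exact (hneg _ p1).le
  have hy0 : 0 < y := lt_of_lt_of_le (hpos x₀ hx₀) hy1
  have hmono := hfm.monotoneOn
  have hY : ∀ n, X (n+1) ≤ Y n ∧ Y n ≤ X n := by
    intro n
    induction n with
    | zero =>
      constructor
      · simpa [hXdef, hYdef] using hy1
      · simpa [hYdef, hXdef] using hy2
    | succ n ih =>
      obtain ⟨l, r⟩ := ih
      have hXn1 : 0 < X (n+1) := (hX (n+1)).1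
      have hYn : 0 < Y n := lt_of_lt_of_le hXn1 l
      have e1 : X (n+2) = f (X (n+1)) := Function.iterate_succ_apply' f (n+1) x₀
      have e2 : Y (n+1) = f (Y n) := Function.iterate_succ_apply' f n y
      constructor
      · rw [e1, e2]
        exact hmono (le_of_lt hXn1 : X (n+1) ∈ Ici (0:ℝ)) (hYn.le : Y n ∈ Ici (0:ℝ)) l
      · rw [e2]
        have e3 : X (n+1) = f (X n) := Function.iterate_succ_apply' f n x₀
        rw [e3]
        exact hmono (hYn.le : Y n ∈ Ici (0:ℝ)) ((hX n).1.le : X n ∈ Ici (0:ℝ)) r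
  have hYpos : ∀ n, 0 < Y n := fun n => lt_of_lt_of_le (hX (n+1)).1 (hY n).1
  set a : ℕ → ℝ := fun n => Real.log (F1 (X n)) - Real.log (F1 (Y n)) with hadef
  have ha_bound : ∀ n, |a n| ≤ (2*M₂) * x₀^(p-1) * (X n - X (n+1)) := by
    intro n
    have h1 : |a n| ≤ (2*M₂) * (X n)^(p-1) * (X n - Y n) :=
      hkey (Y n) (X n) (hYpos n).le (hY n).2 ((hX n).2.2.trans hx₀δ₁.le)
    refine h1.trans ?_
    have h2 : (X n)^(p-1) ≤ x₀^(p-1) := pow_le_pow_left₀ (hX n).1.le (hX n).2.2 _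
    have h3 : X n - Y n ≤ X n - X (n+1) := by linarith [(hY n).1]
    have h4 : 0 ≤ X n - Y n := sub_nonneg.mpr (hY n).2
    have h5 : (0:ℝ) ≤ 2*M₂ := by linarith
    calc (2*M₂) * (X n)^(p-1) * (X n - Y n) ≤ (2*M₂) * x₀^(p-1) * (X n - Y n) := by
          apply mul_le_mul_of_nonneg_right _ h4
          exact mul_le_mul_of_nonneg_left h2 h5
    _ ≤ (2*M₂) * x₀^(p-1) * (X n - X (n+1)) := by
          apply mul_le_mul_of_nonneg_left h3
          exact mul_nonneg h5 (pow_nonneg hx₀.le _)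
  have hpartial : ∀ N, ∑ n ∈ Finset.range N, |a n| ≤ (2*M₂) * x₀^p := by
    intro N
    have h1 : ∑ n ∈ Finset.range N, |a n|
        ≤ ∑ n ∈ Finset.range N, (2*M₂) * x₀^(p-1) * (X n - X (n+1)) :=
      Finset.sum_le_sum (fun n _ => ha_bound n)
    have h2 : ∑ n ∈ Finset.range N, (2*M₂) * x₀^(p-1) * (X n - X (n+1))
        = (2*M₂) * x₀^(p-1) * (X 0 - X N) := by
      rw [← Finset.mul_sum, Finset.sum_range_sub' X]
    have h3 : X 0 - X N ≤ x₀ := by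
      have : X 0 = x₀ := rfl
      have := (hX N).1
      simp only [hXdef, Function.iterate_zero, id_eq]
      linarith
    have h5 : (0:ℝ) ≤ 2*M₂ * x₀^(p-1) := by
      apply mul_nonneg (by linarith) (pow_nonneg hx₀.le _)
    calc ∑ n ∈ Finset.range N, |a n| ≤ (2*M₂) * x₀^(p-1) * (X 0 - X N) := by
          rw [← h2]; exact h1
    _ ≤ (2*M₂) * x₀^(p-1) * x₀ := mul_le_mul_of_nonneg_left h3 h5
    _ = (2*M₂) * (x₀^(p-1) * x₀) := by ring
    _ = (2*M₂) * x₀^p := by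
          rw [← pow_succ, Nat.sub_add_cancel hp]
  have hsumabs : Summable (fun n => |a n|) :=
    summable_of_sum_range_le (fun n => abs_nonneg _) hpartial
  have hsuma : Summable a := hsumabs.of_abs
  set S : ℝ := ∑' n, a n with hSdef
  have hStend : Tendsto (fun N => ∑ n ∈ Finset.range N, a n) atTop (nhds S) :=
    hsuma.hasSum.tendsto_sum_nat
  have hSbound : |S| ≤ (2*M₂) * x₀^p := by
    have hsumnorm : Summable (fun n => ‖a n‖) := by
      simpa [Real.norm_eq_abs] using hsumabs
    have h7 : ‖∑' n, a n‖ ≤ ∑' n, ‖a n‖ := norm_tsum_le_tsum_norm hsumnorm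
    have h8 : ∑' n, ‖a n‖ ≤ (2*M₂) * x₀^p := by
      refine Summable.tsum_le_of_sum_range_le hsumnorm (fun N => ?_)
      simpa [Real.norm_eq_abs] using hpartial N
    calc |S| = ‖∑' n, a n‖ := by rw [Real.norm_eq_abs]
    _ ≤ ∑' n, ‖a n‖ := h7
    _ ≤ (2*M₂) * x₀^p := h8
  have hF1Xpos : ∀ n, 0 < F1 (X n) := by
    intro n
    have : (1:ℝ)/2 ≤ F1 (X n) := hδ₁ _ ⟨(hX n).1.le, (hX n).2.2.trans hx₀δ₁.le⟩
    linarith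
  have hF1Ypos : ∀ n, 0 < F1 (Y n) := by
    intro n
    have : (1:ℝ)/2 ≤ F1 (Y n) :=
      hδ₁ _ ⟨(hYpos n).le, ((hY n).2.trans ((hX n).2.2.trans hx₀δ₁.le))⟩
    linarith
  have hprod : ∀ N, (∏ n ∈ Finset.range N, F1 (X n) / F1 (Y n))
      = Real.exp (∑ n ∈ Finset.range N, a n) := by
    intro N
    rw [Real.exp_sum]
    apply Finset.prod_congr rfl
    intro n _
    rw [hadef]
    rw [Real.exp_sub, Real.exp_log (hF1Xpos n), Real.exp_log (hF1Ypos n)]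
  refine ⟨Real.exp S, ?_, ?_⟩
  · have : Tendsto (fun N => Real.exp (∑ n ∈ Finset.range N, a n)) atTop (nhds (Real.exp S)) :=
      (Real.continuous_exp.tendsto S).comp hStend
    convert this using 1
    funext N
    exact hprod N
  · have hS1 : |S| ≤ 1 := by
      have h1 : x₀^p ≤ x₀ := by
        calc x₀^p ≤ x₀^1 := pow_le_pow_of_le_one hx₀.le hx₀1 hp
        _ = x₀ := pow_one x₀
      have h2 : (2*M₂) * x₀^p ≤ (2*M₂) * x₀ := mul_le_mul_of_nonneg_left h1 (by linarith)
      have h3 : (2*M₂) * x₀ ≤ (2*M₂) * (1/(2*M₂+1)) :=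
        mul_le_mul_of_nonneg_left hx₀M (by linarith)
      have h4 : (2*M₂) * (1/(2*M₂+1)) ≤ 1 := by
        rw [mul_one_div, div_le_one (by linarith)]
        linarith
      linarith [hSbound]
    have := Real.abs_exp_sub_one_le hS1
    calc |Real.exp S - 1| ≤ 2 * |S| := this
    _ ≤ 2 * ((2*M₂) * x₀^p) := by linarith [hSbound]
    _ = 4*M₂ * x₀^p := by ring
    _ ≤ (4*M₂ + 1) * x₀^p := by
        have : (0:ℝ) ≤ x₀^p := pow_nonneg hx₀.le _
        linarith
end
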